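/- arXiv:2410.18470 — 6 statements merged into one kernel-verified Lean document; each statement's English description precedes it below -/
import Mathlib

section
/- Let p^* ∈ E with p^* ≠ p_i for all i, let p ∈ E satisfy ‖p − p^*‖ < ‖p_i − p^*‖ for all i (so in particular p ≠ p_i for all i), set δ = p − p^*, and suppose Λ > 0 satisfies Σ_{i=1}^n ω_i (‖x‖² − ⟨g_i(p^*), x⟩²) ≤ Λ‖x‖² for all x ∈ E. Then Σ_{i=1}^n ω_i d_i(p)(1 − ⟨g_i(p), g_i(p^*)⟩) ≤ Λ‖δ‖² / min_{1≤i≤n} d_i(p). -/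
open scoped RealInnerProductSpace BigOperators

/-!
Write `u = P i - p*` and `v = P i - p = u - δ`, and let `e = u / ‖u‖` be the bearing at `p*`.
Then `d_i(p) (1 - ⟨g_i(p), e⟩) = ‖v‖ - ⟨v, e⟩`, and since `v` and `-δ` differ by a multiple of
`e`, their components orthogonal to `e` agree: `‖v‖² - ⟨v, e⟩² = ‖δ‖² - ⟨e, δ⟩²`. As
`0 ≤ ⟨v, e⟩ ≤ ‖v‖` (the first because `‖δ‖ ≤ ‖u‖`), the elementary inequality
`x - s ≤ (x² - s²) / x` bounds each term by `(‖δ‖² - ⟨e, δ⟩²) / d_i(p)`. Replacing `d_i(p)` by the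
minimum distance and summing with the weights, the hypothesis on `Λ` applied to `x = δ` finishes.
-/

noncomputable def bearing {d n : ℕ} (P : Fin n → EuclideanSpace ℝ (Fin d))
    (q : EuclideanSpace ℝ (Fin d)) (i : Fin n) : EuclideanSpace ℝ (Fin d) :=
  ‖P i - q‖⁻¹ • (P i - q)

lemma sub_le_sq_sub_sq_div {x s : ℝ} (hs : 0 ≤ s) (hsx : s ≤ x) : x - s ≤ (x ^ 2 - s ^ 2) / x := by
  rcases hsx.eq_or_lt with rfl | hlt
  · simp
  rw [le_div_iff₀ (hs.trans_lt hlt)]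
  nlinarith

section InnerProductSpace

variable {F : Type*} [NormedAddCommGroup F] [InnerProductSpace ℝ F]

lemma norm_mul_inner_inv_norm_smul (v e : F) : ‖v‖ * ⟪‖v‖⁻¹ • v, e⟫ = ⟪v, e⟫ := by
  rcases eq_or_ne v 0 with rfl | hv
  · simp
  rw [real_inner_smul_left, ← mul_assoc, mul_inv_cancel₀ (norm_ne_zero_iff.mpr hv), one_mul]

lemma norm_sq_sub_inner_sq_smul_sub {e : F} (he : ‖e‖ = 1) (c : ℝ) (w : F) :
    ‖c • e - w‖ ^ 2 - ⟪c • e - w, e⟫ ^ 2 = ‖w‖ ^ 2 - ⟪e, w⟫ ^ 2 := by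
  have hee : ⟪e, e⟫ = 1 := by rw [real_inner_self_eq_norm_sq, he, one_pow]
  rw [norm_sub_sq_real, norm_smul, Real.norm_eq_abs, mul_pow, sq_abs, he, inner_sub_left,
    real_inner_smul_left, real_inner_smul_left, hee, real_inner_comm w e]
  ring

lemma norm_mul_one_sub_inner_normalize_le {u δ : F} (hδ : ‖δ‖ ≤ ‖u‖) :
    ‖u - δ‖ * (1 - ⟪‖u - δ‖⁻¹ • (u - δ), ‖u‖⁻¹ • u⟫) ≤
      (‖δ‖ ^ 2 - ⟪‖u‖⁻¹ • u, δ⟫ ^ 2) / ‖u - δ‖ := by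
  rcases eq_or_ne u 0 with rfl | hu
  · obtain rfl : δ = 0 := norm_le_zero_iff.mp (by simpa using hδ)
    simp
  set e := ‖u‖⁻¹ • u
  have he : ‖e‖ = 1 := norm_smul_inv_norm hu
  have hue : u = ‖u‖ • e := by rw [smul_inv_smul₀ (norm_ne_zero_iff.mpr hu)]
  have hs : ⟪u - δ, e⟫ = ‖u‖ - ⟪e, δ⟫ := by
    rw [inner_sub_left, hue, real_inner_smul_left, real_inner_self_eq_norm_sq, he,
      real_inner_comm, ← hue]
    ring
  have hs_nonneg : 0 ≤ ⟪u - δ, e⟫ := by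
    have := real_inner_le_norm e δ
    rw [he, one_mul] at this
    linarith
  have hs_le : ⟪u - δ, e⟫ ≤ ‖u - δ‖ := by
    simpa [he] using real_inner_le_norm (u - δ) e
  have horth : ‖δ‖ ^ 2 - ⟪e, δ⟫ ^ 2 = ‖u - δ‖ ^ 2 - ⟪u - δ, e⟫ ^ 2 := by
    conv_rhs => rw [hue]
    exact (norm_sq_sub_inner_sq_smul_sub he _ _).symm
  rw [mul_one_sub, norm_mul_inner_inv_norm_smul, horth]
  exact sub_le_sq_sub_sq_div hs_nonneg hs_le

lemma inner_sq_le_norm_sq_of_norm_eq_one {e : F} (he : ‖e‖ = 1) (w : F) : ⟪e, w⟫ ^ 2 ≤ ‖w‖ ^ 2 := by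
  have := abs_real_inner_le_norm e w
  rw [he, one_mul] at this
  exact sq_le_sq' (abs_le.mp this).1 (abs_le.mp this).2

end InnerProductSpace

theorem stmt_4 {d n : ℕ} (hn : 3 ≤ n)
    (P : Fin n → EuclideanSpace ℝ (Fin d)) (ω : Fin n → ℝ) (hω : ∀ i, 0 < ω i)
    (pstar : EuclideanSpace ℝ (Fin d))
    (p : EuclideanSpace ℝ (Fin d))
    (hball : ∀ i, ‖p - pstar‖ < ‖P i - pstar‖)
    (Lam : ℝ)
    (hquad : ∀ x : EuclideanSpace ℝ (Fin d),
      ∑ i, ω i * (‖x‖ ^ 2 - ⟪bearing P pstar i, x⟫ ^ 2) ≤ Lam * ‖x‖ ^ 2) :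
    ∑ i, ω i * ‖P i - p‖ * (1 - ⟪bearing P p i, bearing P pstar i⟫) ≤
      Lam * ‖p - pstar‖ ^ 2 /
        (Finset.univ.inf' (Finset.univ_nonempty_iff.mpr ⟨⟨0, by omega⟩⟩)
          (fun i => ‖P i - p‖)) := by
  set m := Finset.univ.inf' _ fun i => ‖P i - p‖
  have hdist_pos (i : Fin n) : 0 < ‖P i - p‖ :=
    norm_pos_iff.mpr (sub_ne_zero.mpr fun h => (hball i).ne (by rw [h]))
  have hm_pos : 0 < m := (Finset.lt_inf'_iff _).mpr fun i _ => hdist_pos i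
  have hterm (i : Fin n) : ω i * ‖P i - p‖ * (1 - ⟪bearing P p i, bearing P pstar i⟫) ≤
      ω i * ((‖p - pstar‖ ^ 2 - ⟪bearing P pstar i, p - pstar⟫ ^ 2) / m) := by
    have hpi := norm_mul_one_sub_inner_normalize_le (hball i).le
    rw [sub_sub_sub_cancel_right] at hpi
    have hu : P i - pstar ≠ 0 := norm_pos_iff.mp ((norm_nonneg _).trans_lt (hball i))
    have hnum :=
      inner_sq_le_norm_sq_of_norm_eq_one (norm_smul_inv_norm (𝕜 := ℝ) hu) (p - pstar)
    rw [mul_assoc]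
    refine mul_le_mul_of_nonneg_left (hpi.trans ?_) (hω i).le
    exact div_le_div_of_nonneg_left (sub_nonneg.mpr hnum) hm_pos
      (Finset.inf'_le _ (Finset.mem_univ i))
  calc _ ≤ ∑ i, ω i * ((‖p - pstar‖ ^ 2 - ⟪bearing P pstar i, p - pstar⟫ ^ 2) / m) :=
        Finset.sum_le_sum fun i _ => hterm i
    _ = (∑ i, ω i * (‖p - pstar‖ ^ 2 - ⟪bearing P pstar i, p - pstar⟫ ^ 2)) / m := by
        simp only [Finset.sum_div, mul_div_assoc]
    _ ≤ Lam * ‖p - pstar‖ ^ 2 / m := div_le_div_of_nonneg_right (hquad _) hm_pos.le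
end

section
/- Let p ∈ E with p ≠ p_i for all i and let p^* ∈ E with p^* ≠ p_i for all i. Then ⟨p − p^*, Σ_{i=1}^n ω_i (g_i(p) − g_i(p^*))⟩ ≤ −Σ_{i=1}^n ω_i d_i(p)(1 − ⟨g_i(p), g_i(p^*)⟩) ≤ 0, and consequently ‖p − p^*‖ · ‖Σ_{i=1}^n ω_i (g_i(p) − g_i(p^*))‖ ≥ Σ_{i=1}^n ω_i d_i(p)(1 − ⟨g_i(p), g_i(p^*)⟩). -/
open scoped RealInnerProductSpace BigOperators

lemma key_aux {E : Type*} [NormedAddCommGroup E] [InnerProductSpace ℝ E]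
    (a b : E) (ha : a ≠ 0) (hb : b ≠ 0) :
    ⟪b - a, ‖a‖⁻¹ • a - ‖b‖⁻¹ • b⟫ = (‖a‖ + ‖b‖) * (⟪‖a‖⁻¹ • a, ‖b‖⁻¹ • b⟫ - 1) := by
  have hna : ‖a‖ ≠ 0 := norm_ne_zero_iff.2 ha
  have hnb : ‖b‖ ≠ 0 := norm_ne_zero_iff.2 hb
  simp only [inner_sub_left, inner_sub_right, real_inner_smul_left, real_inner_smul_right,
    real_inner_self_eq_norm_sq, real_inner_comm b a]
  field_simp
  ring

lemma inner_unit_le_one {E : Type*} [NormedAddCommGroup E] [InnerProductSpace ℝ E]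
    (a b : E) (ha : a ≠ 0) (hb : b ≠ 0) :
    ⟪‖a‖⁻¹ • a, ‖b‖⁻¹ • b⟫ ≤ 1 := by
  have hna : ‖a‖ ≠ 0 := norm_ne_zero_iff.2 ha
  have hnb : ‖b‖ ≠ 0 := norm_ne_zero_iff.2 hb
  have h := real_inner_le_norm (‖a‖⁻¹ • a) (‖b‖⁻¹ • b)
  rwa [norm_smul, norm_smul, norm_inv, norm_norm, norm_inv, norm_norm,
    inv_mul_cancel₀ hna, inv_mul_cancel₀ hnb, one_mul] at h

theorem stmt_5 {d n : ℕ} (hd : 2 ≤ d) (hn : 3 ≤ n)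
    (P : Fin n → EuclideanSpace ℝ (Fin d)) (ω : Fin n → ℝ) (hω : ∀ i, 0 < ω i)
    (p pstar : EuclideanSpace ℝ (Fin d))
    (hp : ∀ i, p ≠ P i) (hps : ∀ i, pstar ≠ P i) :
    (⟪p - pstar, ∑ i, ω i • (bearing P p i - bearing P pstar i)⟫ ≤
      -∑ i, ω i * ‖P i - p‖ * (1 - ⟪bearing P p i, bearing P pstar i⟫)) ∧
    (-∑ i, ω i * ‖P i - p‖ * (1 - ⟪bearing P p i, bearing P pstar i⟫) ≤ 0) ∧
    (∑ i, ω i * ‖P i - p‖ * (1 - ⟪bearing P p i, bearing P pstar i⟫) ≤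
      ‖p - pstar‖ * ‖∑ i, ω i • (bearing P p i - bearing P pstar i)‖) := by
  have ha : ∀ i, P i - p ≠ 0 := fun i => sub_ne_zero.2 fun h => hp i h.symm
  have hb : ∀ i, P i - pstar ≠ 0 := fun i => sub_ne_zero.2 fun h => hps i h.symm
  have hterm : ∀ i, ⟪p - pstar, bearing P p i - bearing P pstar i⟫ =
      (‖P i - p‖ + ‖P i - pstar‖) * (⟪bearing P p i, bearing P pstar i⟫ - 1) := by
    intro i
    have h1 : p - pstar = (P i - pstar) - (P i - p) := by abel
    rw [h1, bearing, bearing, key_aux _ _ (ha i) (hb i)]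
  have hle1 : ∀ i, ⟪bearing P p i, bearing P pstar i⟫ ≤ 1 := fun i =>
    inner_unit_le_one _ _ (ha i) (hb i)
  have hsum : ⟪p - pstar, ∑ i, ω i • (bearing P p i - bearing P pstar i)⟫ =
      ∑ i, ω i * ((‖P i - p‖ + ‖P i - pstar‖) * (⟪bearing P p i, bearing P pstar i⟫ - 1)) := by
    rw [inner_sum]
    refine Finset.sum_congr rfl fun i _ => ?_
    rw [real_inner_smul_right, hterm i]
  have h1 : ⟪p - pstar, ∑ i, ω i • (bearing P p i - bearing P pstar i)⟫ ≤
      -∑ i, ω i * ‖P i - p‖ * (1 - ⟪bearing P p i, bearing P pstar i⟫) := by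
    rw [hsum, ← Finset.sum_neg_distrib]
    refine Finset.sum_le_sum fun i _ => ?_
    have hbpos : 0 ≤ ‖P i - pstar‖ := norm_nonneg _
    nlinarith [mul_nonneg (mul_nonneg (hω i).le hbpos) (sub_nonneg.2 (hle1 i))]
  have h2 : 0 ≤ ∑ i, ω i * ‖P i - p‖ * (1 - ⟪bearing P p i, bearing P pstar i⟫) :=
    Finset.sum_nonneg fun i _ =>
      mul_nonneg (mul_nonneg (hω i).le (norm_nonneg _)) (sub_nonneg.2 (hle1 i))
  refine ⟨h1, neg_nonpos.2 h2, ?_⟩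
  have h3 : ∑ i, ω i * ‖P i - p‖ * (1 - ⟪bearing P p i, bearing P pstar i⟫) ≤
      -⟪p - pstar, ∑ i, ω i • (bearing P p i - bearing P pstar i)⟫ := by linarith
  calc ∑ i, ω i * ‖P i - p‖ * (1 - ⟪bearing P p i, bearing P pstar i⟫)
      ≤ -⟪p - pstar, ∑ i, ω i • (bearing P p i - bearing P pstar i)⟫ := h3
    _ ≤ |⟪p - pstar, ∑ i, ω i • (bearing P p i - bearing P pstar i)⟫| := neg_le_abs _
    _ ≤ ‖p - pstar‖ * ‖∑ i, ω i • (bearing P p i - bearing P pstar i)‖ :=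
        abs_real_inner_le_norm _ _
end

section
/- Assume the beacons p_1, …, p_n do not all lie on a common line. Then for every p ∈ E with p ≠ p_i for all i and every nonzero v ∈ E, one has Σ_{i=1}^n (ω_i / d_i(p)) (‖v‖² − ⟨g_i(p), v⟩²) > 0; that is, the Hessian quadratic form H(p)(v,v) = Σ_{i=1}^n ω_i ⟨P_{g_i(p)} v, v⟩ / d_i(p) of the Fermat–Weber cost is positive definite, where P_g v = v − ⟨g, v⟩ g. -/
open scoped RealInnerProductSpace BigOperators

theorem stmt_6 {d n : ℕ} (hd : 2 ≤ d) (hn : 3 ≤ n)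
    (P : Fin n → EuclideanSpace ℝ (Fin d)) (ω : Fin n → ℝ) (hω : ∀ i, 0 < ω i)
    (hnc : ¬ Collinear ℝ (Set.range P)) :
    ∀ p : EuclideanSpace ℝ (Fin d), (∀ i, p ≠ P i) →
      ∀ v : EuclideanSpace ℝ (Fin d), v ≠ 0 →
        0 < ∑ i, (ω i / ‖P i - p‖) * (‖v‖ ^ 2 - ⟪bearing P p i, v⟫ ^ 2) := by
  intro p hp v hv
  have hsub : ∀ i, P i - p ≠ 0 := fun i => sub_ne_zero.mpr (fun h => hp i h.symm)
  have hnormpos : ∀ i, 0 < ‖P i - p‖ := fun i => norm_pos_iff.mpr (hsub i)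
  have hb : ∀ i, ‖bearing P p i‖ = 1 := by
    intro i
    rw [bearing, norm_smul, norm_inv, norm_norm, inv_mul_cancel₀ (hnormpos i).ne']
  have hnn : ∀ i, 0 ≤ ‖v‖ ^ 2 - ⟪bearing P p i, v⟫ ^ 2 := by
    intro i
    have h1 : |⟪bearing P p i, v⟫| ≤ ‖bearing P p i‖ * ‖v‖ := abs_real_inner_le_norm _ _
    rw [hb i, one_mul] at h1
    nlinarith [abs_nonneg ⟪bearing P p i, v⟫, sq_abs ⟪bearing P p i, v⟫]
  have hpos : ∃ i, 0 < ‖v‖ ^ 2 - ⟪bearing P p i, v⟫ ^ 2 := by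
    by_contra hcon
    push_neg at hcon
    have heq : ∀ i, ⟪bearing P p i, v⟫ ^ 2 = ‖v‖ ^ 2 := fun i =>
      le_antisymm (by linarith [hnn i]) (by linarith [hcon i])
    apply hnc
    rw [collinear_iff_exists_forall_eq_smul_vadd]
    refine ⟨p, v, ?_⟩
    rintro _ ⟨i, rfl⟩
    -- v is a multiple of bearing i, hence P i - p is a multiple of v
    have h2 : ⟪bearing P p i, v⟫ = ‖v‖ ∨ ⟪bearing P p i, v⟫ = -‖v‖ := by
      have := heq i
      have : (⟪bearing P p i, v⟫ - ‖v‖) * (⟪bearing P p i, v⟫ + ‖v‖) = 0 := by ring_nf; nlinarith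
      rcases mul_eq_zero.mp this with h | h
      · left; linarith
      · right; linarith
    have hvg : ∃ c : ℝ, v = c • bearing P p i := by
      rcases h2 with h | h
      · have : ⟪bearing P p i, v⟫ = ‖bearing P p i‖ * ‖v‖ := by rw [hb i, one_mul, h]
        have h3 := inner_eq_norm_mul_iff_real.mp this
        rw [hb i, one_smul] at h3
        exact ⟨‖v‖, h3.symm⟩
      · have : ⟪-(bearing P p i), v⟫ = ‖-(bearing P p i)‖ * ‖v‖ := by
          rw [inner_neg_left, norm_neg, hb i, one_mul, h, neg_neg]
        have h3 := inner_eq_norm_mul_iff_real.mp this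
        rw [norm_neg, hb i, one_smul, smul_neg] at h3
        exact ⟨-‖v‖, by rw [neg_smul, h3]⟩
    obtain ⟨c, hc⟩ := hvg
    have hc0 : c ≠ 0 := by
      rintro rfl; rw [zero_smul] at hc; exact hv hc
    -- P i - p = ‖P i - p‖ • bearing, and bearing = c⁻¹ • v
    have hbear : bearing P p i = c⁻¹ • v := by
      rw [hc, smul_smul, inv_mul_cancel₀ hc0, one_smul]
    have h5 : P i - p = (‖P i - p‖ * c⁻¹) • v := by
      have h4 : ‖P i - p‖ • bearing P p i = P i - p := by
        rw [bearing, smul_smul, mul_inv_cancel₀ (hnormpos i).ne', one_smul]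
      conv_lhs => rw [← h4, hbear, smul_smul]
    refine ⟨‖P i - p‖ * c⁻¹, ?_⟩
    have h6 := sub_eq_iff_eq_add.mp h5
    simpa using h6
  obtain ⟨j, hj⟩ := hpos
  have : 0 < (ω j / ‖P j - p‖) * (‖v‖ ^ 2 - ⟪bearing P p j, v⟫ ^ 2) :=
    mul_pos (div_pos (hω j) (hnormpos j)) hj
  refine Finset.sum_pos' (fun i _ => ?_) ⟨j, Finset.mem_univ j, this⟩
  exact mul_nonneg (div_pos (hω i) (hnormpos i)).le (hnn i)
end

section
/- Assume the beacons p_1, …, p_n do not all lie on a common line, and let p^* ∈ E with p^* ≠ p_i for all i. If q ∈ E satisfies the bearing constraints (p_i − q) − ⟨p_i − q, g_i(p^*)⟩ g_i(p^*) = 0 for all i = 1, …, n (i.e., P_{g_i(p^*)}(p_i − q) = 0 where P_g v = v − ⟨g,v⟩g), then q = p^*. In other words, p^* is the unique point consistent with all of its bearing vectors to the beacons. -/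
open scoped RealInnerProductSpace BigOperators

theorem stmt_8 {d n : ℕ} (hd : 2 ≤ d) (hn : 3 ≤ n)
    (P : Fin n → EuclideanSpace ℝ (Fin d)) (ω : Fin n → ℝ) (hω : ∀ i, 0 < ω i)
    (hnc : ¬ Collinear ℝ (Set.range P))
    (pstar : EuclideanSpace ℝ (Fin d)) (hps : ∀ i, pstar ≠ P i)
    (q : EuclideanSpace ℝ (Fin d))
    (hq : ∀ i, (P i - q) - ⟪P i - q, bearing P pstar i⟫ • bearing P pstar i = 0) :
    q = pstar := by
  by_contra hne
  apply hnc
  rw [collinear_iff_exists_forall_eq_smul_vadd]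
  refine ⟨pstar, q - pstar, ?_⟩
  rintro p ⟨i, rfl⟩
  have h := hq i
  rw [sub_eq_zero] at h
  obtain ⟨c, hPq⟩ : ∃ c : ℝ, P i - q = c • (P i - pstar) :=
    ⟨_, by rw [h, bearing, smul_smul]⟩
  have hkey : (1 - c) • (P i - pstar) = q - pstar := by
    rw [sub_smul, one_smul, ← hPq]; abel
  have hc1 : (1 : ℝ) - c ≠ 0 := by
    intro h0
    rw [h0, zero_smul] at hkey
    exact hne (sub_eq_zero.mp hkey.symm)
  refine ⟨(1 - c)⁻¹, ?_⟩
  have hthis : P i - pstar = (1 - c)⁻¹ • (q - pstar) := by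
    rw [← hkey, smul_smul, inv_mul_cancel₀ hc1, one_smul]
  simp only [vadd_eq_add]
  rw [← hthis]; abel
end

section
/- Assume the beacons do not all lie on a common line and let p^* be a Fermat–Weber point. Then for every p ∈ E with p ≠ p_i for all i and p ≠ p^*, one has ⟨p − p^*, Σ_{i=1}^n ω_i g_i(p)⟩ < 0; i.e., the bearing sum Σ ω_i g_i(p) makes a strictly negative inner product with the displacement from the Fermat–Weber point, and it vanishes only at p = p^*. -/
open scoped RealInnerProductSpace BigOperators

/-- Key computation: the inner product of the displacement with the difference of
unit bearing vectors. -/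
lemma bearing_inner_eq {E : Type*} [NormedAddCommGroup E] [InnerProductSpace ℝ E]
    (x y : E) (hx : x ≠ 0) (hy : y ≠ 0) :
    ⟪y - x, ‖x‖⁻¹ • x - ‖y‖⁻¹ • y⟫ =
      (‖x‖⁻¹ + ‖y‖⁻¹) * ⟪x, y⟫ - ‖x‖ - ‖y‖ := by
  have hx' : ‖x‖ ≠ 0 := norm_ne_zero_iff.2 hx
  have hy' : ‖y‖ ≠ 0 := norm_ne_zero_iff.2 hy
  have h1 : ⟪x, x⟫ = ‖x‖ * ‖x‖ := real_inner_self_eq_norm_mul_norm x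
  have h2 : ⟪y, y⟫ = ‖y‖ * ‖y‖ := real_inner_self_eq_norm_mul_norm y
  have h3 : ⟪y, x⟫ = ⟪x, y⟫ := real_inner_comm x y
  rw [inner_sub_left, inner_sub_right, inner_sub_right, real_inner_smul_right,
    real_inner_smul_right, real_inner_smul_right, real_inner_smul_right, h1, h2, h3]
  field_simp
  ring

lemma bearing_inner_nonpos {E : Type*} [NormedAddCommGroup E] [InnerProductSpace ℝ E]
    (x y : E) (hx : x ≠ 0) (hy : y ≠ 0) :
    ⟪y - x, ‖x‖⁻¹ • x - ‖y‖⁻¹ • y⟫ ≤ 0 := by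
  rw [bearing_inner_eq x y hx hy]
  have hx' : (0:ℝ) < ‖x‖ := norm_pos_iff.2 hx
  have hy' : (0:ℝ) < ‖y‖ := norm_pos_iff.2 hy
  have hcs : ⟪x, y⟫ ≤ ‖x‖ * ‖y‖ := real_inner_le_norm x y
  have hpos : (0:ℝ) < ‖x‖⁻¹ + ‖y‖⁻¹ := by positivity
  have : (‖x‖⁻¹ + ‖y‖⁻¹) * ⟪x, y⟫ ≤ (‖x‖⁻¹ + ‖y‖⁻¹) * (‖x‖ * ‖y‖) :=
    mul_le_mul_of_nonneg_left hcs hpos.le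
  have heq : (‖x‖⁻¹ + ‖y‖⁻¹) * (‖x‖ * ‖y‖) = ‖x‖ + ‖y‖ := by
    field_simp
    ring
  linarith [this, heq ▸ this]

lemma bearing_inner_neg {E : Type*} [NormedAddCommGroup E] [InnerProductSpace ℝ E]
    (x y : E) (hx : x ≠ 0) (hy : y ≠ 0) (hne : ¬ ‖y‖ • x = ‖x‖ • y) :
    ⟪y - x, ‖x‖⁻¹ • x - ‖y‖⁻¹ • y⟫ < 0 := by
  rw [bearing_inner_eq x y hx hy]
  have hx' : (0:ℝ) < ‖x‖ := norm_pos_iff.2 hx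
  have hy' : (0:ℝ) < ‖y‖ := norm_pos_iff.2 hy
  have hcs : ⟪x, y⟫ < ‖x‖ * ‖y‖ := by
    rcases lt_or_eq_of_le (real_inner_le_norm x y) with h | h
    · exact h
    · exact absurd (inner_eq_norm_mul_iff_real.1 h) hne
  have hpos : (0:ℝ) < ‖x‖⁻¹ + ‖y‖⁻¹ := by positivity
  have : (‖x‖⁻¹ + ‖y‖⁻¹) * ⟪x, y⟫ < (‖x‖⁻¹ + ‖y‖⁻¹) * (‖x‖ * ‖y‖) :=
    mul_lt_mul_of_pos_left hcs hpos
  have heq : (‖x‖⁻¹ + ‖y‖⁻¹) * (‖x‖ * ‖y‖) = ‖x‖ + ‖y‖ := by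
    field_simp
    ring
  linarith [this, heq ▸ this]

theorem stmt_10 {d n : ℕ} (hd : 2 ≤ d) (hn : 3 ≤ n)
    (P : Fin n → EuclideanSpace ℝ (Fin d)) (ω : Fin n → ℝ) (hω : ∀ i, 0 < ω i)
    (hnc : ¬ Collinear ℝ (Set.range P))
    (pstar : EuclideanSpace ℝ (Fin d)) (hps : ∀ i, pstar ≠ P i)
    (hFW : ∑ i, ω i • bearing P pstar i = 0) :
    ∀ p : EuclideanSpace ℝ (Fin d), (∀ i, p ≠ P i) → p ≠ pstar →
      ⟪p - pstar, ∑ i, ω i • bearing P p i⟫ < 0 := by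
  intro p hp hpps
  -- rewrite using hFW
  have hsum : ⟪p - pstar, ∑ i, ω i • bearing P p i⟫ =
      ∑ i, ω i * ⟪p - pstar, bearing P p i - bearing P pstar i⟫ := by
    have : (∑ i, ω i • bearing P p i) =
        ∑ i, (ω i • bearing P p i - ω i • bearing P pstar i) := by
      rw [Finset.sum_sub_distrib, hFW, sub_zero]
    rw [this, inner_sum]
    congr 1
    ext i
    rw [← smul_sub, real_inner_smul_right]
  -- pointwise facts
  have hxne : ∀ i, P i - p ≠ 0 := fun i => sub_ne_zero.2 (fun h => hp i h.symm)
  have hyne : ∀ i, P i - pstar ≠ 0 := fun i => sub_ne_zero.2 (fun h => hps i h.symm)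
  have hterm : ∀ i, ⟪p - pstar, bearing P p i - bearing P pstar i⟫ =
      ⟪(P i - pstar) - (P i - p),
        ‖P i - p‖⁻¹ • (P i - p) - ‖P i - pstar‖⁻¹ • (P i - pstar)⟫ := by
    intro i
    congr 1
    abel
  -- find a beacon not on the line through pstar and p
  rw [collinear_iff_exists_forall_eq_smul_vadd] at hnc
  push_neg at hnc
  obtain ⟨q, hq, hqline⟩ := hnc pstar (p - pstar)
  obtain ⟨j, rfl⟩ := hq
  -- the strict term for j
  have hstrict : ⟪p - pstar, bearing P p j - bearing P pstar j⟫ < 0 := by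
    rw [hterm j]
    apply bearing_inner_neg _ _ (hxne j) (hyne j)
    intro heq
    set x := P j - p
    set y := P j - pstar
    have hxpos : (0:ℝ) < ‖x‖ := norm_pos_iff.2 (hxne j)
    have hypos : (0:ℝ) < ‖y‖ := norm_pos_iff.2 (hyne j)
    -- x = (‖x‖/‖y‖) • y
    have hx_eq : x = (‖y‖⁻¹ * ‖x‖) • y := by
      have h := congrArg (fun z => (‖y‖⁻¹ : ℝ) • z) heq
      simp only [smul_smul, inv_mul_cancel₀ hypos.ne', one_smul] at h
      exact h
    set c := ‖y‖⁻¹ * ‖x‖ with hc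
    have hc1 : c ≠ 1 := by
      intro h
      rw [h, one_smul] at hx_eq
      -- x = y means P j - p = P j - pstar, so p = pstar
      apply hpps
      exact sub_right_injective (hx_eq : P j - p = P j - pstar)
    -- p - pstar = y - x = (1 - c) • y
    have hdisp : p - pstar = (1 - c) • y := by
      have : p - pstar = y - x := by simp only [x, y]; abel
      rw [this, hx_eq, sub_smul, one_smul]
    -- P j = p* + (1-c)⁻¹ • (p - p*)
    apply hqline ((1 - c)⁻¹)
    have h1c : (1:ℝ) - c ≠ 0 := sub_ne_zero.2 (Ne.symm hc1)
    have : (1 - c)⁻¹ • (p - pstar) = y := by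
      rw [hdisp, smul_smul, inv_mul_cancel₀ h1c, one_smul]
    rw [vadd_eq_add, this]
    simp [y]
  -- all terms ≤ 0
  have hle : ∀ i, ⟪p - pstar, bearing P p i - bearing P pstar i⟫ ≤ 0 := by
    intro i
    rw [hterm i]
    exact bearing_inner_nonpos _ _ (hxne i) (hyne i)
  rw [hsum]
  have : ∑ i : Fin n, ω i * ⟪p - pstar, bearing P p i - bearing P pstar i⟫ <
      ∑ _i : Fin n, (0:ℝ) := by
    apply Finset.sum_lt_sum
    · intro i _
      exact mul_nonpos_of_nonneg_of_nonpos (hω i).le (hle i)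
    · exact ⟨j, Finset.mem_univ j, mul_neg_of_pos_of_neg (hω j) hstrict⟩
  simpa using this
end

section
/- Assume the beacons do not all lie on a common line and let p^* be a Fermat–Weber point. Fix a ∈ (0,1), and for v ∈ E define sig^a(v) componentwise in the standard basis by (sig^a(v))_k = sign(v_k)·|v_k|^a. Let p : [0,∞) → E be differentiable with p(t) ≠ p_i for all t ≥ 0 and all i, satisfying p′(t) = sig^a(Σ_{i=1}^n ω_i g_i(p(t))) for all t ≥ 0. Then p(t) → p^* as t → ∞. -/
/-!
The Fermat–Weber cost `F q = ∑ ωᵢ ‖pᵢ - q‖` is convex with negative (sub)gradient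
`U q = ∑ ωᵢ gᵢ(q)`, so the critical point `p*` minimises `F`; it is the unique minimiser, since
a second one would force equality in the triangle inequality at every beacon, putting all beacons
on one line. Along the flow `F` decreases at rate `⟪U, sig^a U⟫ ≥ ‖U‖^(1+a)`. Convexity gives
`F q - F p* ≤ ‖U q‖ ‖q - p*‖`, and `(∑ ωᵢ) ‖q - p*‖ ≤ F q + F p*`, so `‖U‖` is bounded below
wherever `F` stays above a level `L > F p*`; hence `F (p t)` decreases to `F p*`. Sublevel sets
of `F` are compact and `p*` is the only point at level `F p*`, so `p t → p*`.
-/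

open scoped RealInnerProductSpace BigOperators

/-- Componentwise signed power `sig^a` in the standard basis. -/
noncomputable def siga {d : ℕ} (a : ℝ) (v : EuclideanSpace ℝ (Fin d)) :
    EuclideanSpace ℝ (Fin d) :=
  WithLp.toLp 2 (fun k => Real.sign (v k) * |v k| ^ a)

open Filter Topology

section Lyapunov

variable {V V' : ℝ → ℝ}

theorem antitoneOn_Ici_of_hasDerivAt_nonpos (hV : ∀ t ≥ 0, HasDerivAt V (V' t) t)
    (hV' : ∀ t ≥ 0, V' t ≤ 0) : AntitoneOn V (Set.Ici 0) :=
  antitoneOn_of_hasDerivWithinAt_nonpos (convex_Ici 0)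
    (fun t ht => (hV t ht).continuousAt.continuousWithinAt)
    (fun t ht => (hV t (interior_subset ht)).hasDerivWithinAt)
    (fun t ht => hV' t (interior_subset ht))

theorem le_sub_mul_of_hasDerivAt_le_neg {c : ℝ} (hV : ∀ t ≥ 0, HasDerivAt V (V' t) t)
    (hV' : ∀ t ≥ 0, V' t ≤ -c) {t : ℝ} (ht : 0 ≤ t) : V t ≤ V 0 - c * t := by
  have hanti : AntitoneOn (fun s => V s + c * s) (Set.Ici 0) :=
    antitoneOn_Ici_of_hasDerivAt_nonpos (V' := fun s => V' s + c)
      (fun s hs => by simpa using (hV s hs).fun_add ((hasDerivAt_id' s).const_mul c))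
      (fun s hs => by linarith [hV' s hs])
  have := hanti Set.self_mem_Ici ht ht
  simp only [mul_zero, add_zero] at this
  linarith

theorem tendsto_of_hasDerivAt_of_le_neg {v₀ : ℝ} (hV : ∀ t ≥ 0, HasDerivAt V (V' t) t)
    (hV'_nonpos : ∀ t ≥ 0, V' t ≤ 0) (hV_ge : ∀ t ≥ 0, v₀ ≤ V t)
    (hdecay : ∀ L > v₀, ∃ c > 0, ∀ t ≥ 0, L ≤ V t → V' t ≤ -c) :
    Tendsto V atTop (𝓝 v₀) := by
  refine tendsto_order.2 ⟨fun l hl => ?_, fun L hL => ?_⟩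
  · filter_upwards [eventually_ge_atTop 0] with t ht using hl.trans_le (hV_ge t ht)
  obtain ⟨c, hc, hV'c⟩ := hdecay L hL
  obtain ⟨T, hT, hVT⟩ : ∃ T ≥ 0, V T < L := by
    by_contra! hstay
    set T := (V 0 - v₀) / c + 1
    have hT : 0 ≤ T := by
      have := hV_ge 0 le_rfl
      positivity
    have hlin := le_sub_mul_of_hasDerivAt_le_neg hV (fun t ht => hV'c t ht (hstay t ht)) hT
    have : c * T = V 0 - v₀ + c := by simp only [T]; field_simp
    linarith [hV_ge T hT]
  filter_upwards [eventually_ge_atTop T] with t ht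
  exact (antitoneOn_Ici_of_hasDerivAt_nonpos hV hV'_nonpos hT (hT.trans ht) ht).trans_lt hVT

end Lyapunov

theorem tendsto_of_tendsto_comp_of_strict_min {α X : Type*} [TopologicalSpace X] {l : Filter α}
    {f : X → ℝ} {u : α → X} {z : X} {c : ℝ} (hf : Continuous f)
    (hK : IsCompact {x | f x ≤ c}) (hc : f z < c) (hz : ∀ x ≠ z, f z < f x)
    (hu : Tendsto (f ∘ u) l (𝓝 (f z))) : Tendsto u l (𝓝 z) := by
  refine hK.tendsto_nhds_of_unique_mapClusterPt
    ((hu.eventually (gt_mem_nhds hc)).mono fun _ h => h.le) fun x _ hx => ?_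
  have hfx : f x = f z := eq_of_nhds_neBot <|
    (ClusterPt.mono (hx.continuousAt_comp hf.continuousAt) hu).neBot
  by_contra hne
  exact (hz x hne).ne' hfx

theorem mem_affineSpan_pair_of_sameRay_sub {V : Type*} [AddCommGroup V] [Module ℝ V]
    {b q z : V} (hqz : q ≠ z) (h : SameRay ℝ (b - q) (b - z)) : b ∈ line[ℝ, q, z] := by
  have h' : SameRay ℝ (q -ᵥ b) (z -ᵥ b) := by simpa using h.neg
  rcases wbtw_total_of_sameRay_vsub_left h' with hw | hw
  · exact hw.collinear.mem_affineSpan_of_mem_of_ne (by simp) (by simp) (by simp) hqz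
  · exact hw.collinear.mem_affineSpan_of_mem_of_ne (by simp) (by simp) (by simp) hqz

theorem collinear_of_subset_affineSpan_pair {k V P : Type*} [DivisionRing k] [AddCommGroup V]
    [Module k V] [AddTorsor V P] {s : Set P} {q z : P} (h : s ⊆ line[k, q, z]) :
    Collinear k s := by
  refine Collinear.subset h ?_
  change Module.rank k (affineSpan k {q, z}).direction ≤ 1
  rw [direction_affineSpan]
  exact collinear_pair k q z

section InnerProductSpace

variable {E : Type*} [NormedAddCommGroup E] [InnerProductSpace ℝ E]

theorem HasDerivAt.norm {γ : ℝ → E} {γ' : E} {t : ℝ} (hγ : HasDerivAt γ γ' t) (h0 : γ t ≠ 0) :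
    HasDerivAt (fun s => ‖γ s‖) (‖γ t‖⁻¹ * ⟪γ t, γ'⟫) t := by
  have hsq : ‖γ t‖ ^ 2 ≠ 0 := pow_ne_zero 2 (norm_ne_zero_iff.2 h0)
  convert hγ.norm_sq.sqrt hsq using 1
  · simp only [Real.sqrt_sq (norm_nonneg _)]
  · rw [Real.sqrt_sq (norm_nonneg _)]
    field_simp

-- At `q = b` the unit vector is `0` (as `0⁻¹ = 0`) and the inequality still holds.
theorem norm_sub_le_norm_sub_add_inner (b q q' : E) :
    ‖b - q‖ ≤ ‖b - q'‖ + ⟪‖b - q‖⁻¹ • (b - q), q' - q⟫ := by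
  set g := ‖b - q‖⁻¹ • (b - q)
  have hg : ‖g‖ ≤ 1 := by
    rw [norm_smul, norm_inv, norm_norm]
    exact inv_mul_le_one
  have hgb : ⟪g, b - q⟫ = ‖b - q‖ := by
    rw [real_inner_smul_left, real_inner_self_eq_norm_sq]
    rcases eq_or_ne ‖b - q‖ 0 with h | h
    · simp [h]
    · field_simp
  calc ‖b - q‖ = ⟪g, b - q'⟫ + ⟪g, q' - q⟫ := by
        rw [← inner_add_right, sub_add_sub_cancel, hgb]
    _ ≤ ‖g‖ * ‖b - q'‖ + ⟪g, q' - q⟫ := by gcongr; exact real_inner_le_norm _ _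
    _ ≤ ‖b - q'‖ + ⟪g, q' - q⟫ := by
        gcongr; exact mul_le_of_le_one_left (norm_nonneg _) hg

end InnerProductSpace

section FermatWeberCost

variable {ι E : Type*} [Fintype ι] [NormedAddCommGroup E] {P : ι → E} {ω : ι → ℝ}

variable (P ω) in
noncomputable def fermatWeberCost (q : E) : ℝ := ∑ i, ω i * ‖P i - q‖

theorem continuous_fermatWeberCost : Continuous (fermatWeberCost P ω) := by
  unfold fermatWeberCost
  fun_prop

theorem fermatWeberCost_nonneg (hω : ∀ i, 0 ≤ ω i) (q : E) : 0 ≤ fermatWeberCost P ω q :=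
  Finset.sum_nonneg fun i _ => mul_nonneg (hω i) (norm_nonneg _)

theorem sum_mul_norm_sub_le_fermatWeberCost_add (hω : ∀ i, 0 ≤ ω i) (q z : E) :
    (∑ i, ω i) * ‖q - z‖ ≤ fermatWeberCost P ω q + fermatWeberCost P ω z := by
  simp only [fermatWeberCost, Finset.sum_mul, ← Finset.sum_add_distrib, ← mul_add]
  refine Finset.sum_le_sum fun i _ => mul_le_mul_of_nonneg_left ?_ (hω i)
  exact (norm_sub_le_norm_sub_add_norm_sub q (P i) z).trans_eq (by rw [norm_sub_rev q])

theorem isCompact_fermatWeberCost_le [ProperSpace E] [Nonempty ι] (hω : ∀ i, 0 < ω i) (c : ℝ) :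
    IsCompact {q | fermatWeberCost P ω q ≤ c} := by
  have hW : 0 < ∑ i, ω i := Finset.sum_pos (fun i _ => hω i) Finset.univ_nonempty
  refine Metric.isCompact_of_isClosed_isBounded
    (isClosed_le continuous_fermatWeberCost continuous_const) ?_
  refine (Metric.isBounded_closedBall (x := 0)
    (r := (c + fermatWeberCost P ω 0) / ∑ i, ω i)).subset fun q hq => ?_
  rw [Metric.mem_closedBall, dist_eq_norm, le_div_iff₀ hW, mul_comm]
  exact (sum_mul_norm_sub_le_fermatWeberCost_add (fun i => (hω i).le) q 0).trans
    (by gcongr; exact hq)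

end FermatWeberCost

section FermatWeberField

variable {ι E : Type*} [Fintype ι] [NormedAddCommGroup E] [InnerProductSpace ℝ E]
  {P : ι → E} {ω : ι → ℝ}

variable (P ω) in
noncomputable def fermatWeberField (q : E) : E := ∑ i, ω i • (‖P i - q‖⁻¹ • (P i - q))

theorem HasDerivAt.fermatWeberCost {γ : ℝ → E} {γ' : E} {t : ℝ} (hγ : HasDerivAt γ γ' t)
    (hne : ∀ i, γ t ≠ P i) :
    HasDerivAt (fun s => fermatWeberCost P ω (γ s)) (-⟪fermatWeberField P ω (γ t), γ'⟫) t := by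
  have hterm : ∀ i ∈ Finset.univ, HasDerivAt (fun s => ω i * ‖P i - γ s‖)
      (ω i * (‖P i - γ t‖⁻¹ * ⟪P i - γ t, -γ'⟫)) t := fun i _ =>
    ((hγ.const_sub (P i)).norm (sub_ne_zero.2 (hne i).symm)).const_mul (ω i)
  refine (HasDerivAt.fun_sum hterm).congr_deriv ?_
  simp only [fermatWeberField, sum_inner, real_inner_smul_left, inner_neg_right,
    ← Finset.sum_neg_distrib]
  congr 1 with i
  ring

theorem fermatWeberCost_le_add_inner (hω : ∀ i, 0 ≤ ω i) (q q' : E) :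
    fermatWeberCost P ω q ≤ fermatWeberCost P ω q' + ⟪fermatWeberField P ω q, q' - q⟫ := by
  rw [fermatWeberField, sum_inner, fermatWeberCost, fermatWeberCost, ← Finset.sum_add_distrib]
  refine Finset.sum_le_sum fun i _ => ?_
  rw [real_inner_smul_left, ← mul_add]
  exact mul_le_mul_of_nonneg_left (norm_sub_le_norm_sub_add_inner (P i) q q') (hω i)

theorem fermatWeberCost_le_of_field_eq_zero (hω : ∀ i, 0 ≤ ω i) {z : E}
    (hz : fermatWeberField P ω z = 0) (q : E) : fermatWeberCost P ω z ≤ fermatWeberCost P ω q := by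
  simpa [hz] using fermatWeberCost_le_add_inner (P := P) hω z q

theorem two_mul_fermatWeberCost_midpoint (q z : E) :
    2 * fermatWeberCost P ω (midpoint ℝ q z) = ∑ i, ω i * ‖(P i - q) + (P i - z)‖ := by
  simp only [fermatWeberCost, Finset.mul_sum]
  refine Finset.sum_congr rfl fun i _ => ?_
  rw [← vsub_eq_sub, vsub_midpoint, ← smul_add, norm_smul]
  norm_num
  ring

theorem fermatWeberCost_lt_of_not_collinear (hω : ∀ i, 0 < ω i)
    (hP : ¬Collinear ℝ (Set.range P)) {z : E}
    (hz : ∀ y, fermatWeberCost P ω z ≤ fermatWeberCost P ω y) {q : E} (hq : q ≠ z) :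
    fermatWeberCost P ω z < fermatWeberCost P ω q := by
  refine (hz q).lt_of_ne fun heq =>
    hP <| collinear_of_subset_affineSpan_pair (q := q) (z := z) ?_
  rintro _ ⟨i, rfl⟩
  set slack : ι → ℝ := fun j => ‖P j - q‖ + ‖P j - z‖ - ‖(P j - q) + (P j - z)‖
  have hslack : ∀ j ∈ Finset.univ, 0 ≤ ω j * slack j := fun j _ =>
    mul_nonneg (hω j).le (sub_nonneg.2 (norm_add_le _ _))
  have hsum : ∑ j, ω j * slack j = 0 := by
    refine le_antisymm ?_ (Finset.sum_nonneg hslack)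
    have hexpand : ∑ j, ω j * slack j = fermatWeberCost P ω q + fermatWeberCost P ω z -
        2 * fermatWeberCost P ω (midpoint ℝ q z) := by
      rw [two_mul_fermatWeberCost_midpoint]
      simp only [slack, fermatWeberCost, mul_sub, mul_add,
        Finset.sum_sub_distrib, Finset.sum_add_distrib]
    linarith [hz (midpoint ℝ q z)]
  have hi := (Finset.sum_eq_zero_iff_of_nonneg hslack).1 hsum i (Finset.mem_univ i)
  have hi' : slack i = 0 := (mul_eq_zero.1 hi).resolve_left (hω i).ne'
  refine mem_affineSpan_pair_of_sameRay_sub hq (sameRay_iff_norm_add.2 ?_)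
  simp only [slack] at hi'
  linarith

theorem exists_pos_le_norm_fermatWeberField [Nonempty ι] (hω : ∀ i, 0 < ω i) (z : E) {L : ℝ}
    (hL : fermatWeberCost P ω z < L) :
    ∃ m > 0, ∀ q, L ≤ fermatWeberCost P ω q → m ≤ ‖fermatWeberField P ω q‖ := by
  set f := fermatWeberCost P ω z
  set W := ∑ i, ω i
  have hW : 0 < W := Finset.sum_pos (fun i _ => hω i) Finset.univ_nonempty
  have hf : 0 ≤ f := fermatWeberCost_nonneg (fun i => (hω i).le) z
  refine ⟨W * (L - f) / (L + f), div_pos (mul_pos hW (by linarith)) (by linarith),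
    fun q hq => ?_⟩
  set x := fermatWeberCost P ω q
  set u := ‖fermatWeberField P ω q‖
  have hdecr : x - f ≤ u * ‖q - z‖ := by
    have := fermatWeberCost_le_add_inner (P := P) (fun i => (hω i).le) q z
    have := real_inner_le_norm (fermatWeberField P ω q) (z - q)
    rw [norm_sub_rev] at this
    linarith
  have hdist : W * ‖q - z‖ ≤ x + f :=
    sum_mul_norm_sub_le_fermatWeberCost_add (fun i => (hω i).le) q z
  have hux : W * (x - f) ≤ u * (x + f) :=
    calc W * (x - f) ≤ W * (u * ‖q - z‖) := mul_le_mul_of_nonneg_left hdecr hW.le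
      _ = u * (W * ‖q - z‖) := by ring
      _ ≤ u * (x + f) := mul_le_mul_of_nonneg_left hdist (norm_nonneg _)
  -- `W (x - f) / (x + f)` is increasing in `x ≥ L`.
  rw [div_le_iff₀ (by linarith)]
  have h1 : W * (L - f) * (x + f) ≤ W * (x - f) * (L + f) := by
    nlinarith [mul_nonneg (mul_nonneg hW.le hf) (sub_nonneg.2 hq)]
  have h2 : W * (x - f) * (L + f) ≤ u * (x + f) * (L + f) :=
    mul_le_mul_of_nonneg_right hux (by linarith)
  exact le_of_mul_le_mul_right (by linarith) (by linarith : 0 < x + f)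

end FermatWeberField

theorem mul_sign_mul_abs_rpow {a : ℝ} (ha : 0 < a) (x : ℝ) :
    x * (Real.sign x * |x| ^ a) = |x| ^ (1 + a) := by
  rcases lt_trichotomy x 0 with h | rfl | h
  · rw [Real.sign_of_neg h, Real.rpow_add (abs_pos.2 h.ne), Real.rpow_one, abs_of_neg h]
    ring
  · simp [Real.zero_rpow (by linarith : 1 + a ≠ 0)]
  · rw [Real.sign_of_pos h, Real.rpow_add (abs_pos.2 h.ne'), Real.rpow_one, abs_of_pos h]
    ring

theorem inner_siga_self {d : ℕ} {a : ℝ} (ha : 0 < a) (v : EuclideanSpace ℝ (Fin d)) :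
    ⟪v, siga a v⟫ = ∑ k, |v k| ^ (1 + a) := by
  simp only [PiLp.inner_apply, siga, RCLike.inner_apply, conj_trivial, mul_comm _ (v _),
    mul_sign_mul_abs_rpow ha]

theorem norm_rpow_le_inner_siga {d : ℕ} {a : ℝ} (ha0 : 0 < a) (ha1 : a ≤ 1)
    (v : EuclideanSpace ℝ (Fin d)) : ‖v‖ ^ (1 + a) ≤ ⟪v, siga a v⟫ := by
  rw [inner_siga_self ha0]
  rcases (norm_nonneg v).eq_or_lt with hv | hv
  · rw [← hv, Real.zero_rpow (by linarith)]
    exact Finset.sum_nonneg fun k _ => by positivity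
  have hsplit : ∀ x : ℝ, 0 ≤ x → x ^ (1 - a) * x ^ (1 + a) = x ^ 2 := fun x hx => by
    rw [← Real.rpow_add' hx (by norm_num), show 1 - a + (1 + a) = (2 : ℕ) by norm_num,
      Real.rpow_natCast]
  have hcoord : ∀ k, |v k| ^ 2 ≤ ‖v‖ ^ (1 - a) * |v k| ^ (1 + a) := fun k => by
    rw [← hsplit _ (abs_nonneg _)]
    gcongr
    simpa using PiLp.norm_apply_le v k
  refine le_of_mul_le_mul_left ?_ (by positivity : 0 < ‖v‖ ^ (1 - a))
  rw [hsplit _ (norm_nonneg v), EuclideanSpace.norm_sq_eq, Finset.mul_sum]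
  exact Finset.sum_le_sum fun k _ => by simpa using hcoord k

theorem stmt_12_general {d n : ℕ}
    (P : Fin n → EuclideanSpace ℝ (Fin d)) (ω : Fin n → ℝ) (hω : ∀ i, 0 < ω i)
    (hnc : ¬ Collinear ℝ (Set.range P))
    (pstar : EuclideanSpace ℝ (Fin d))
    (hFW : ∑ i, ω i • bearing P pstar i = 0)
    (a : ℝ) (ha : a ∈ Set.Ioo (0:ℝ) 1)
    (p : ℝ → EuclideanSpace ℝ (Fin d))
    (hpne : ∀ t ≥ (0:ℝ), ∀ i, p t ≠ P i)
    (hdyn : ∀ t ≥ (0:ℝ),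
      HasDerivAt p (siga a (∑ i, ω i • bearing P (p t) i)) t) :
    Filter.Tendsto p Filter.atTop (nhds pstar) := by
  have : Nonempty (Fin n) := Set.range_nonempty_iff_nonempty.1 <|
    Set.nonempty_iff_ne_empty.2 fun h => hnc (h ▸ collinear_empty ℝ _)
  have hmin : ∀ q, fermatWeberCost P ω pstar ≤ fermatWeberCost P ω q :=
    fermatWeberCost_le_of_field_eq_zero (fun i => (hω i).le) hFW
  refine tendsto_of_tendsto_comp_of_strict_min continuous_fermatWeberCost
    (isCompact_fermatWeberCost_le hω _) (lt_add_one _)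
    (fun q hq => fermatWeberCost_lt_of_not_collinear hω hnc hmin hq) ?_
  refine tendsto_of_hasDerivAt_of_le_neg
    (V' := fun t => -⟪fermatWeberField P ω (p t), siga a (fermatWeberField P ω (p t))⟫)
    (fun t ht => (hdyn t ht).fermatWeberCost (hpne t ht))
    (fun t _ => neg_nonpos.2 ((Real.rpow_nonneg (norm_nonneg _) _).trans
      (norm_rpow_le_inner_siga ha.1 ha.2.le _)))
    (fun t _ => hmin (p t)) fun L hL => ?_
  obtain ⟨m, hm, hmU⟩ := exists_pos_le_norm_fermatWeberField hω pstar hL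
  refine ⟨m ^ (1 + a), by positivity, fun t _ hLt => neg_le_neg ?_⟩
  exact (Real.rpow_le_rpow hm.le (hmU _ hLt) (by linarith [ha.1])).trans
    (norm_rpow_le_inner_siga ha.1 ha.2.le _)

theorem stmt_12 {d n : ℕ} (hd : 2 ≤ d) (hn : 3 ≤ n)
    (P : Fin n → EuclideanSpace ℝ (Fin d)) (ω : Fin n → ℝ) (hω : ∀ i, 0 < ω i)
    (hnc : ¬ Collinear ℝ (Set.range P))
    (pstar : EuclideanSpace ℝ (Fin d)) (hps : ∀ i, pstar ≠ P i)
    (hFW : ∑ i, ω i • bearing P pstar i = 0)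
    (a : ℝ) (ha : a ∈ Set.Ioo (0:ℝ) 1)
    (p : ℝ → EuclideanSpace ℝ (Fin d))
    (hpne : ∀ t ≥ (0:ℝ), ∀ i, p t ≠ P i)
    (hdyn : ∀ t ≥ (0:ℝ),
      HasDerivAt p (siga a (∑ i, ω i • bearing P (p t) i)) t) :
    Filter.Tendsto p Filter.atTop (nhds pstar) :=
  stmt_12_general P ω hω hnc pstar hFW a ha p hpne hdyn
end
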